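/- If (X,d) is a complete extended metric space, then (X,d_ℓ), where d_ℓ is the intrinsic metric associated to d, is also a complete extended metric space. -/

import Mathlib

/-!
A `d_ℓ`-Cauchy sequence is `d`-Cauchy because `d ≤ d_ℓ`, so it has a `d`-limit `x`. Along a
subsequence `v` with `∑ d_ℓ(v k, v (k + 1))` small, choose almost shortest curves between
consecutive terms and run them one after another. The concatenation reaches `v k` at the partial
sum `s k` of the lengths, and `s k` increases to the total length `L`; since `v k → x` in `d`,
giving it the value `x` at time `L` yields a `1`-Lipschitz curve from `v 0` to `x`, whence
`d_ℓ(v 0, x) ≤ ∑ d_ℓ(v k, v (k + 1))`.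
-/

open ENNReal NNReal

/-- The intrinsic (length) extended distance associated to an extended metric:
the infimum of lengths `ℓ` of `1`-Lipschitz curves `[0, ℓ] → X` joining the two points. -/
noncomputable def intrinsicEDist {X : Type*} [EMetricSpace X] (x x' : X) : ℝ≥0∞ :=
  sInf {L : ℝ≥0∞ | ∃ ℓ : ℝ≥0, L = (ℓ : ℝ≥0∞) ∧ ∃ φ : ℝ → X,
    LipschitzOnWith 1 φ (Set.Icc 0 (ℓ : ℝ)) ∧ φ 0 = x ∧ φ (ℓ : ℝ) = x'}

open Filter Set Topology

lemma ENNReal.ofReal_sub_add_ofReal_sub {a b c : ℝ} (hab : a ≤ b) (hbc : b ≤ c) :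
    ENNReal.ofReal (b - a) + ENNReal.ofReal (c - b) = ENNReal.ofReal (c - a) := by
  rw [← ENNReal.ofReal_add (sub_nonneg.2 hab) (sub_nonneg.2 hbc), sub_add_sub_cancel']

lemma exists_mem_Ico_succ {α : Type*} [LinearOrder α] {s : ℕ → α} {t : α} (h0 : s 0 ≤ t)
    (h : ∃ k, t < s k) : ∃ k, t ∈ Ico (s k) (s (k + 1)) := by
  classical
  obtain ⟨k, hk⟩ : ∃ k, Nat.find h = k + 1 :=
    Nat.exists_eq_succ_of_ne_zero fun h' => (Nat.find_spec h).not_ge (h' ▸ h0)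
  exact ⟨k, not_lt.1 (Nat.find_min h (by omega)), hk ▸ Nat.find_spec h⟩

lemma exists_strictMono_zero_eq_forall_le (A : ℕ → ℕ) {n : ℕ} (hn : A 0 ≤ n) :
    ∃ w : ℕ → ℕ, StrictMono w ∧ w 0 = n ∧ ∀ k, A k ≤ w k := by
  let w : ℕ → ℕ := fun k => Nat.rec n (fun k wk => max (wk + 1) (A (k + 1))) k
  refine ⟨w, strictMono_nat_of_lt_succ fun k => ?_, rfl, fun k => ?_⟩
  · exact (Nat.lt_succ_self _).trans_le (le_max_left _ (A (k + 1)))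
  · cases k with
    | zero => exact hn
    | succ k => exact le_max_right _ _

section Curves

variable {X : Type*} [EMetricSpace X]

lemma lipschitzOnWith_one_iff_edist_le_ofReal_sub {f : ℝ → X} {t : Set ℝ} :
    LipschitzOnWith 1 f t ↔
      ∀ a ∈ t, ∀ b ∈ t, a ≤ b → edist (f a) (f b) ≤ ENNReal.ofReal (b - a) := by
  have hedist : ∀ a b : ℝ, a ≤ b → edist a b = ENNReal.ofReal (b - a) := fun a b hab => by
    rw [edist_dist, Real.dist_eq, abs_of_nonpos (sub_nonpos.2 hab), neg_sub]
  refine ⟨fun hf a ha b hb hab => ?_, fun h a ha b hb => ?_⟩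
  · simpa [hedist a b hab] using hf ha hb
  · rw [ENNReal.coe_one, one_mul]
    rcases le_total a b with hab | hba
    · exact (h a ha b hb hab).trans_eq (hedist a b hab).symm
    · rw [edist_comm, edist_comm a]
      exact (h b hb a ha hba).trans_eq (hedist b a hba).symm

lemma LipschitzOnWith.edist_le_ofReal_sub {f : ℝ → X} {t : Set ℝ} (hf : LipschitzOnWith 1 f t)
    {a b : ℝ} (ha : a ∈ t) (hb : b ∈ t) (hab : a ≤ b) :
    edist (f a) (f b) ≤ ENNReal.ofReal (b - a) :=
  lipschitzOnWith_one_iff_edist_le_ofReal_sub.1 hf a ha b hb hab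

end Curves

section Concatenation

variable {X : Type*} {s : ℕ → ℝ} {L : ℝ} {x : X} {ψ : ℕ → ℝ → X}

noncomputable def concatCurve (s : ℕ → ℝ) (ψ : ℕ → ℝ → X) (x : X) (t : ℝ) : X :=
  open Classical in
  if h : ∃ k, t ∈ Ico (s k) (s (k + 1)) then ψ h.choose t else x

lemma concatCurve_eq (hs : Monotone s) {k : ℕ} {t : ℝ} (ht : t ∈ Ico (s k) (s (k + 1))) :
    concatCurve s ψ x t = ψ k t := by
  have h : ∃ k, t ∈ Ico (s k) (s (k + 1)) := ⟨k, ht⟩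
  rw [concatCurve, dif_pos h]
  by_contra hne
  exact disjoint_left.1 (hs.pairwise_disjoint_on_Ico_succ fun h' => hne (by rw [h']))
    h.choose_spec ht

lemma concatCurve_eq_of_le (hsL : ∀ k, s k ≤ L) {t : ℝ} (ht : L ≤ t) :
    concatCurve s ψ x t = x :=
  dif_neg fun ⟨k, _, hk⟩ => (hk.trans_le (hsL (k + 1))).not_ge ht

variable [EMetricSpace X] {v : ℕ → X}

lemma edist_le_ofReal_sub_of_monotone (hs : Monotone s)
    (hstep : ∀ k, edist (v k) (v (k + 1)) ≤ ENNReal.ofReal (s (k + 1) - s k))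
    {j k : ℕ} (hjk : j ≤ k) : edist (v j) (v k) ≤ ENNReal.ofReal (s k - s j) := by
  induction k, hjk using Nat.le_induction with
  | base => simp
  | succ k hjk ih =>
    calc edist (v j) (v (k + 1)) ≤ edist (v j) (v k) + edist (v k) (v (k + 1)) :=
          edist_triangle _ _ _
      _ ≤ ENNReal.ofReal (s k - s j) + ENNReal.ofReal (s (k + 1) - s k) := add_le_add ih (hstep k)
      _ = ENNReal.ofReal (s (k + 1) - s j) :=
          ENNReal.ofReal_sub_add_ofReal_sub (hs hjk) (hs k.le_succ)

lemma edist_le_ofReal_sub_of_tendsto (hs : Monotone s) (hsL : Tendsto s atTop (𝓝 L))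
    (hv : Tendsto v atTop (𝓝 x))
    (hstep : ∀ k, edist (v k) (v (k + 1)) ≤ ENNReal.ofReal (s (k + 1) - s k)) (k : ℕ) :
    edist (v k) x ≤ ENNReal.ofReal (L - s k) := by
  refine le_of_tendsto (tendsto_const_nhds.edist hv) ?_
  filter_upwards [eventually_ge_atTop k] with m hkm
  exact (edist_le_ofReal_sub_of_monotone hs hstep hkm).trans
    (ENNReal.ofReal_le_ofReal (by linarith [hs.ge_of_tendsto hsL m]))

lemma edist_concatCurve_le_of_le (hs : Monotone s) (hsL : Tendsto s atTop (𝓝 L))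
    (hv : Tendsto v atTop (𝓝 x)) (hψ : ∀ k, LipschitzOnWith 1 (ψ k) (Icc (s k) (s (k + 1))))
    (hψ0 : ∀ k, ψ k (s k) = v k) (hψ1 : ∀ k, ψ k (s (k + 1)) = v (k + 1))
    {m : ℕ} {t : ℝ} (hmt : s m ≤ t) (htL : t ≤ L) :
    edist (v m) (concatCurve s ψ x t) ≤ ENNReal.ofReal (t - s m) := by
  have hstep (k : ℕ) : edist (v k) (v (k + 1)) ≤ ENNReal.ofReal (s (k + 1) - s k) :=
    hψ0 k ▸ hψ1 k ▸ (hψ k).edist_le_ofReal_sub (left_mem_Icc.2 (hs k.le_succ))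
      (right_mem_Icc.2 (hs k.le_succ)) (hs k.le_succ)
  rcases htL.lt_or_eq with htL | rfl
  · obtain ⟨k, hk⟩ := exists_mem_Ico_succ ((hs m.zero_le).trans hmt)
      (hsL.eventually (lt_mem_nhds htL)).exists
    have hmk : m ≤ k := by
      by_contra! hkm
      exact (hk.2.trans_le (hs hkm)).not_ge hmt
    rw [concatCurve_eq hs hk]
    calc edist (v m) (ψ k t) ≤ edist (v m) (v k) + edist (v k) (ψ k t) := edist_triangle _ _ _
      _ ≤ ENNReal.ofReal (s k - s m) + ENNReal.ofReal (t - s k) :=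
          add_le_add (edist_le_ofReal_sub_of_monotone hs hstep hmk)
            (hψ0 k ▸ (hψ k).edist_le_ofReal_sub (left_mem_Icc.2 (hs k.le_succ))
              (Ico_subset_Icc_self hk) hk.1)
      _ = ENNReal.ofReal (t - s m) := ENNReal.ofReal_sub_add_ofReal_sub (hs hmk) hk.1
  · rw [concatCurve_eq_of_le (hs.ge_of_tendsto hsL) le_rfl]
    exact edist_le_ofReal_sub_of_tendsto hs hsL hv hstep m

lemma edist_concatCurve_le (hs : Monotone s) (hsL : Tendsto s atTop (𝓝 L))
    (hv : Tendsto v atTop (𝓝 x)) (hψ : ∀ k, LipschitzOnWith 1 (ψ k) (Icc (s k) (s (k + 1))))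
    (hψ0 : ∀ k, ψ k (s k) = v k) (hψ1 : ∀ k, ψ k (s (k + 1)) = v (k + 1))
    {a b : ℝ} (ha : s 0 ≤ a) (hab : a ≤ b) (hbL : b ≤ L) :
    edist (concatCurve s ψ x a) (concatCurve s ψ x b) ≤ ENNReal.ofReal (b - a) := by
  rcases (hab.trans hbL).lt_or_eq with haL | rfl
  · obtain ⟨k, hk⟩ := exists_mem_Ico_succ ha (hsL.eventually (lt_mem_nhds haL)).exists
    rw [concatCurve_eq hs hk]
    rcases lt_or_ge b (s (k + 1)) with hbk | hkb
    · rw [concatCurve_eq hs ⟨hk.1.trans hab, hbk⟩]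
      exact (hψ k).edist_le_ofReal_sub (Ico_subset_Icc_self hk) ⟨hk.1.trans hab, hbk.le⟩ hab
    · calc edist (ψ k a) (concatCurve s ψ x b)
          ≤ edist (ψ k a) (v (k + 1)) + edist (v (k + 1)) (concatCurve s ψ x b) :=
            edist_triangle _ _ _
        _ ≤ ENNReal.ofReal (s (k + 1) - a) + ENNReal.ofReal (b - s (k + 1)) :=
            add_le_add (hψ1 k ▸ (hψ k).edist_le_ofReal_sub (Ico_subset_Icc_self hk)
              (right_mem_Icc.2 (hs k.le_succ)) hk.2.le)
              (edist_concatCurve_le_of_le hs hsL hv hψ hψ0 hψ1 hkb hbL)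
        _ = ENNReal.ofReal (b - a) := ENNReal.ofReal_sub_add_ofReal_sub hk.2.le hkb
  · simp [le_antisymm hab hbL]

lemma lipschitzOnWith_concatCurve (hs : Monotone s) (hsL : Tendsto s atTop (𝓝 L))
    (hv : Tendsto v atTop (𝓝 x)) (hψ : ∀ k, LipschitzOnWith 1 (ψ k) (Icc (s k) (s (k + 1))))
    (hψ0 : ∀ k, ψ k (s k) = v k) (hψ1 : ∀ k, ψ k (s (k + 1)) = v (k + 1)) :
    LipschitzOnWith 1 (concatCurve s ψ x) (Icc (s 0) L) :=
  lipschitzOnWith_one_iff_edist_le_ofReal_sub.2 fun _ ha _ hb hab =>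
    edist_concatCurve_le hs hsL hv hψ hψ0 hψ1 ha.1 hab hb.2

lemma concatCurve_zero (hs : Monotone s) (hsL : Tendsto s atTop (𝓝 L))
    (hv : Tendsto v atTop (𝓝 x)) (hψ : ∀ k, LipschitzOnWith 1 (ψ k) (Icc (s k) (s (k + 1))))
    (hψ0 : ∀ k, ψ k (s k) = v k) (hψ1 : ∀ k, ψ k (s (k + 1)) = v (k + 1)) :
    concatCurve s ψ x (s 0) = v 0 := by
  have h := edist_concatCurve_le_of_le hs hsL hv hψ hψ0 hψ1 le_rfl (hs.ge_of_tendsto hsL 0)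
  rw [sub_self, ENNReal.ofReal_zero, nonpos_iff_eq_zero, edist_eq_zero] at h
  exact h.symm

end Concatenation

section Intrinsic

variable {X : Type*} [EMetricSpace X]

lemma intrinsicEDist_le_of_lipschitzOnWith {x y : X} {ℓ : ℝ≥0} {φ : ℝ → X}
    (hφ : LipschitzOnWith 1 φ (Icc 0 (ℓ : ℝ))) (h0 : φ 0 = x) (h1 : φ ℓ = y) :
    intrinsicEDist x y ≤ ℓ :=
  sInf_le ⟨ℓ, rfl, φ, hφ, h0, h1⟩

lemma exists_lipschitzOnWith_of_intrinsicEDist_lt {x y : X} {r : ℝ≥0∞}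
    (h : intrinsicEDist x y < r) :
    ∃ ℓ : ℝ≥0, (ℓ : ℝ≥0∞) < r ∧
      ∃ φ : ℝ → X, LipschitzOnWith 1 φ (Icc 0 (ℓ : ℝ)) ∧ φ 0 = x ∧ φ ℓ = y := by
  obtain ⟨_, ⟨ℓ, rfl, hφ⟩, hℓ⟩ := sInf_lt_iff.1 h
  exact ⟨ℓ, hℓ, hφ⟩

lemma edist_le_intrinsicEDist (x y : X) : edist x y ≤ intrinsicEDist x y := by
  refine le_sInf ?_
  rintro _ ⟨ℓ, rfl, φ, hφ, rfl, rfl⟩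
  simpa using hφ.edist_le_ofReal_sub (left_mem_Icc.2 ℓ.coe_nonneg)
    (right_mem_Icc.2 ℓ.coe_nonneg) ℓ.coe_nonneg

lemma intrinsicEDist_le_tsum_of_lipschitzOnWith {v : ℕ → X} {x : X}
    (hv : Tendsto v atTop (𝓝 x)) {ℓ : ℕ → ℝ≥0} {φ : ℕ → ℝ → X}
    (hφ : ∀ k, LipschitzOnWith 1 (φ k) (Icc 0 (ℓ k : ℝ)))
    (hφ0 : ∀ k, φ k 0 = v k) (hφ1 : ∀ k, φ k (ℓ k) = v (k + 1)) :
    intrinsicEDist (v 0) x ≤ ∑' k, (ℓ k : ℝ≥0∞) := by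
  by_cases hℓ : Summable ℓ
  swap
  · simp [not_ne_iff.1 (ENNReal.tsum_coe_ne_top_iff_summable.not.2 hℓ)]
  set s : ℕ → ℝ := fun k => ∑ i ∈ Finset.range k, (ℓ i : ℝ)
  have hs_succ (k : ℕ) : s (k + 1) = s k + ℓ k := Finset.sum_range_succ _ k
  have hs : Monotone s := monotone_nat_of_le_succ fun k => by simp [hs_succ]
  have hsL : Tendsto s atTop (𝓝 (∑' k, ℓ k : ℝ≥0)) := by
    rw [NNReal.coe_tsum]
    exact (NNReal.summable_coe.2 hℓ).hasSum.tendsto_sum_nat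
  set ψ : ℕ → ℝ → X := fun k t => φ k (t - s k)
  have hψ (k : ℕ) : LipschitzOnWith 1 (ψ k) (Icc (s k) (s (k + 1))) := by
    refine lipschitzOnWith_one_iff_edist_le_ofReal_sub.2 fun a ha b hb hab => ?_
    rw [hs_succ] at ha hb
    simpa using (hφ k).edist_le_ofReal_sub (a := a - s k) (b := b - s k)
      ⟨by linarith [ha.1], by linarith [ha.2]⟩ ⟨by linarith [hb.1], by linarith [hb.2]⟩
      (by linarith)
  have hψ0 (k : ℕ) : ψ k (s k) = v k := by simp [ψ, hφ0]
  have hψ1 (k : ℕ) : ψ k (s (k + 1)) = v (k + 1) := by simp [ψ, hs_succ, hφ1]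
  rw [← ENNReal.coe_tsum hℓ]
  refine intrinsicEDist_le_of_lipschitzOnWith (φ := concatCurve s ψ x) ?_ ?_ ?_
  · simpa [s] using lipschitzOnWith_concatCurve hs hsL hv hψ hψ0 hψ1
  · simpa [s] using concatCurve_zero hs hsL hv hψ hψ0 hψ1
  · exact concatCurve_eq_of_le (hs.ge_of_tendsto hsL) le_rfl

theorem intrinsicEDist_le_tsum_of_tendsto {v : ℕ → X} {x : X} (hv : Tendsto v atTop (𝓝 x)) :
    intrinsicEDist (v 0) x ≤ ∑' k, intrinsicEDist (v k) (v (k + 1)) := by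
  refine ENNReal.le_of_forall_pos_le_add fun η hη hfin => ?_
  obtain ⟨δ, hδ, hδη⟩ := ENNReal.exists_pos_sum_of_countable (ENNReal.coe_ne_zero.2 hη.ne') ℕ
  have hlt (k : ℕ) :
      intrinsicEDist (v k) (v (k + 1)) < intrinsicEDist (v k) (v (k + 1)) + δ k :=
    ENNReal.lt_add_right (ne_top_of_le_ne_top hfin.ne (ENNReal.le_tsum k))
      (ENNReal.coe_ne_zero.2 (hδ k).ne')
  choose ℓ hℓ φ hφ hφ0 hφ1 using fun k => exists_lipschitzOnWith_of_intrinsicEDist_lt (hlt k)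
  calc intrinsicEDist (v 0) x ≤ ∑' k, (ℓ k : ℝ≥0∞) :=
        intrinsicEDist_le_tsum_of_lipschitzOnWith hv hφ hφ0 hφ1
    _ ≤ ∑' k, (intrinsicEDist (v k) (v (k + 1)) + δ k) := ENNReal.tsum_le_tsum fun k => (hℓ k).le
    _ = ∑' k, intrinsicEDist (v k) (v (k + 1)) + ∑' k, (δ k : ℝ≥0∞) := ENNReal.tsum_add
    _ ≤ ∑' k, intrinsicEDist (v k) (v (k + 1)) + η := by gcongr

end Intrinsic

theorem completeSpace_intrinsicEDist {X : Type*} [EMetricSpace X] [CompleteSpace X]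
    (u : ℕ → X)
    (hu : ∀ ε : ℝ≥0∞, 0 < ε → ∃ N : ℕ, ∀ m n : ℕ, N ≤ m → N ≤ n →
      intrinsicEDist (u m) (u n) < ε) :
    ∃ x : X, Filter.Tendsto (fun n => intrinsicEDist (u n) x) Filter.atTop (nhds 0) := by
  have hcauchy : CauchySeq u := EMetric.cauchySeq_iff.2 fun ε hε =>
    let ⟨N, hN⟩ := hu ε hε
    ⟨N, fun m hm n hn => (edist_le_intrinsicEDist _ _).trans_lt (hN m n hm hn)⟩
  obtain ⟨x, hx⟩ := cauchySeq_tendsto_of_complete hcauchy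
  refine ⟨x, ENNReal.tendsto_nhds_zero.2 fun ε hε => ?_⟩
  obtain ⟨δ, hδ, hδε⟩ := ENNReal.exists_pos_sum_of_countable hε.ne' ℕ
  choose A hA using fun k => hu (δ k) (ENNReal.coe_pos.2 (hδ k))
  filter_upwards [eventually_ge_atTop (A 0)] with n hn
  obtain ⟨w, hw, rfl, hAw⟩ := exists_strictMono_zero_eq_forall_le A hn
  calc intrinsicEDist (u (w 0)) x ≤ ∑' k, intrinsicEDist (u (w k)) (u (w (k + 1))) :=
        intrinsicEDist_le_tsum_of_tendsto (hx.comp hw.tendsto_atTop)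
    _ ≤ ∑' k, (δ k : ℝ≥0∞) := ENNReal.tsum_le_tsum fun k =>
        (hA k _ _ (hAw k) ((hAw k).trans (hw k.lt_succ_self).le)).le
    _ ≤ ε := hδε.le
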